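/- arXiv:2504.18921 — 2 statements merged into one kernel-verified Lean document; each statement's English description precedes it below -/
import Mathlib

section
/- (Lemma on consistency of the true-set estimate) Suppose the system is s-sparse observable and the attacks satisfy supp(a_i) ⊆ Γ for all i with |Γ| = s. Then there exists r ≤ n such that for every k ≥ r−1, the estimates x̂(m) := L_Γ(Y_{k+m−1,Γ} − D_Γ U_{k+m−2}) (m ≥ 1) satisfy x̂(1) = x_{k−r+1} and x̂(2) − A x̂(1) − B u_{k−r+1} = 0. -/
open Matrix

namespace SS

variable {n p q : ℕ}

/-- The matrix obtained from a matrix `M` with `q` rows by deleting the rows indexed by `S`. -/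
def dele {m' : ℕ} (M : Matrix (Fin q) (Fin m') ℝ) (S : Finset (Fin q)) :
    Matrix {i : Fin q // i ∉ S} (Fin m') ℝ :=
  fun i j => M i.1 j

/-- The vector obtained from `v ∈ ℝ^q` by deleting the entries indexed by `S`. -/
def delv (v : Fin q → ℝ) (S : Finset (Fin q)) : {i : Fin q // i ∉ S} → ℝ :=
  fun i => v i.1

/-- A trajectory of the system `x_{k+1} = A x_k + B u_k`, `y_k = C x_k + a_k`. -/
def Traj (A : Matrix (Fin n) (Fin n) ℝ) (B : Matrix (Fin n) (Fin p) ℝ)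
    (C : Matrix (Fin q) (Fin n) ℝ) (x : ℕ → Fin n → ℝ) (u : ℕ → Fin p → ℝ)
    (a y : ℕ → Fin q → ℝ) : Prop :=
  (∀ k, x (k + 1) = A *ᵥ x k + B *ᵥ u k) ∧ ∀ k, y k = C *ᵥ x k + a k

/-- The stacked matrix `[M; MA; …; MA^{r-1}]`. -/
def stack (A : Matrix (Fin n) (Fin n) ℝ) {ι : Type} (M : Matrix ι (Fin n) ℝ)
    (r : ℕ) : Matrix (Fin r × ι) (Fin n) ℝ :=
  fun i j => (M * A ^ (i.1 : ℕ)) i.2 j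

/-- The pair `(A, M)` is observable: `[M; MA; …; MA^{n-1}]` has rank `n`. -/
def Observable (A : Matrix (Fin n) (Fin n) ℝ) {ι : Type} [Fintype ι]
    (M : Matrix ι (Fin n) ℝ) : Prop :=
  (stack A M n).rank = n

/-- `s`-sparse observability: `(A, C(Γ))` is observable for every `Γ` with `|Γ| = s`. -/
def SparseObs (A : Matrix (Fin n) (Fin n) ℝ) (C : Matrix (Fin q) (Fin n) ℝ)
    (s : ℕ) : Prop :=
  ∀ Γ : Finset (Fin q), Γ.card = s → Observable A (dele C Γ)

/-- `O_S(r) = [C(S); C(S)A; …; C(S)A^{r-1}]`. -/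
def Omat (A : Matrix (Fin n) (Fin n) ℝ) (C : Matrix (Fin q) (Fin n) ℝ)
    (S : Finset (Fin q)) (r : ℕ) :
    Matrix (Fin r × {i : Fin q // i ∉ S}) (Fin n) ℝ :=
  stack A (dele C S) r

/-- `L_S = (O_S(r)ᵀ O_S(r))⁻¹ O_S(r)ᵀ`. -/
noncomputable def Lmat (A : Matrix (Fin n) (Fin n) ℝ) (C : Matrix (Fin q) (Fin n) ℝ)
    (S : Finset (Fin q)) (r : ℕ) :
    Matrix (Fin n) (Fin r × {i : Fin q // i ∉ S}) ℝ :=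
  ((Omat A C S r)ᵀ * Omat A C S r)⁻¹ * (Omat A C S r)ᵀ

/-- Stacked output `Y_{k,S} = [y_{k-r+1}(S); …; y_k(S)]`. -/
def Yvec (y : ℕ → Fin q → ℝ) (S : Finset (Fin q)) (r k : ℕ) :
    Fin r × {i : Fin q // i ∉ S} → ℝ :=
  fun i => delv (y (k + 1 - r + (i.1 : ℕ))) S i.2

/-- Stacked attack `A_{k,S} = [a_{k-r+1}(S); …; a_k(S)]`. -/
def Avec (a : ℕ → Fin q → ℝ) (S : Finset (Fin q)) (r k : ℕ) :
    Fin r × {i : Fin q // i ∉ S} → ℝ :=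
  fun i => delv (a (k + 1 - r + (i.1 : ℕ))) S i.2

/-- Stacked input `U_{k-1} = [u_{k-r+1}; …; u_{k-1}]`. -/
def Uvec (u : ℕ → Fin p → ℝ) (r k : ℕ) : Fin (r - 1) × Fin p → ℝ :=
  fun i => u (k + 1 - r + (i.1 : ℕ)) i.2

/-- Block matrix `D_S`, with `(i, j)` block `C(S) A^{i-j-1} B` for `i > j` and `0` otherwise. -/
def Dmat (A : Matrix (Fin n) (Fin n) ℝ) (B : Matrix (Fin n) (Fin p) ℝ)
    (C : Matrix (Fin q) (Fin n) ℝ) (S : Finset (Fin q)) (r : ℕ) :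
    Matrix (Fin r × {i : Fin q // i ∉ S}) (Fin (r - 1) × Fin p) ℝ :=
  fun i j =>
    if (j.1 : ℕ) < (i.1 : ℕ) then
      (dele C S * A ^ ((i.1 : ℕ) - (j.1 : ℕ) - 1) * B) i.2 j.2
    else 0

/-- The minimal `r` such that `rank O_S(r) = n`. -/
noncomputable def rmin (A : Matrix (Fin n) (Fin n) ℝ) (C : Matrix (Fin q) (Fin n) ℝ)
    (S : Finset (Fin q)) : ℕ :=
  sInf {r : ℕ | (Omat A C S r).rank = n}

/-- `b`: the maximum of `rmin` over all index sets of cardinality `s`. -/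
noncomputable def bBound (A : Matrix (Fin n) (Fin n) ℝ) (C : Matrix (Fin q) (Fin n) ℝ)
    (s : ℕ) : ℕ :=
  (Finset.powersetCard s (Finset.univ : Finset (Fin q))).sup (rmin A C)

/-- Windowed least-squares estimate `x̂_S(m) = L_S (Y_{k+m-1,S} - D_S U_{k+m-2})`. -/
noncomputable def xhat (A : Matrix (Fin n) (Fin n) ℝ) (B : Matrix (Fin n) (Fin p) ℝ)
    (C : Matrix (Fin q) (Fin n) ℝ) (u : ℕ → Fin p → ℝ) (y : ℕ → Fin q → ℝ)
    (S : Finset (Fin q)) (r k m : ℕ) : Fin n → ℝ :=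
  Lmat A C S r *ᵥ (Yvec y S r (k + m - 1) - Dmat A B C S r *ᵥ Uvec u r (k + m - 1))

/-- The filtered index families `D_ς` of Algorithm 1. -/
def Dfam (A : Matrix (Fin n) (Fin n) ℝ) (B : Matrix (Fin n) (Fin p) ℝ)
    (C : Matrix (Fin q) (Fin n) ℝ) (u : ℕ → Fin p → ℝ) (y : ℕ → Fin q → ℝ)
    (s r k : ℕ) : ℕ → Set (Finset (Fin q))
  | 0 => {Γ' : Finset (Fin q) | Γ'.card = s}
  | ς + 1 => {Γ' ∈ Dfam A B C u y s r k ς |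
      xhat A B C u y Γ' r k (ς + 2) - A *ᵥ xhat A B C u y Γ' r k (ς + 1)
        - B *ᵥ u (k + 1 - r + ς) = 0}



private lemma state_sol {n p : ℕ} (A : Matrix (Fin n) (Fin n) ℝ) (B : Matrix (Fin n) (Fin p) ℝ)
    (x : ℕ → Fin n → ℝ) (u : ℕ → Fin p → ℝ)
    (hx : ∀ k, x (k + 1) = A *ᵥ x k + B *ᵥ u k) (t : ℕ) :
    ∀ i : ℕ, x (t + i) = (A ^ i) *ᵥ x t
      + ∑ j ∈ Finset.range i, (A ^ (i - 1 - j) * B) *ᵥ u (t + j) := by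
  intro i
  induction i with
  | zero => simp
  | succ i ih =>
    have : t + (i + 1) = (t + i) + 1 := by omega
    rw [this, hx, ih, Finset.sum_range_succ]
    simp only [Matrix.mulVec_add, Matrix.mulVec_mulVec]
    have hsum : A *ᵥ (∑ j ∈ Finset.range i, (A ^ (i - 1 - j) * B) *ᵥ u (t + j))
        = ∑ j ∈ Finset.range i, (A ^ (i + 1 - 1 - j) * B) *ᵥ u (t + j) := by
      rw [← Matrix.mulVecLin_apply, map_sum]
      refine Finset.sum_congr rfl fun j hj => ?_
      have hj' : j < i := Finset.mem_range.mp hj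
      simp only [Matrix.mulVecLin_apply, Matrix.mulVec_mulVec]
      rw [show i + 1 - 1 - j = (i - 1 - j) + 1 by omega, pow_succ', Matrix.mul_assoc]
    rw [hsum, ← pow_succ']
    have : A ^ (i + 1 - 1 - i) * B = B := by simp
    rw [this, add_assoc]

private lemma key_eq {n p q : ℕ} (A : Matrix (Fin n) (Fin n) ℝ) (B : Matrix (Fin n) (Fin p) ℝ)
    (C : Matrix (Fin q) (Fin n) ℝ) (x : ℕ → Fin n → ℝ) (u : ℕ → Fin p → ℝ)
    (a y : ℕ → Fin q → ℝ) (hT : Traj A B C x u a y)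
    (Γ : Finset (Fin q)) (hsupp : ∀ i, Function.support (a i) ⊆ (Γ : Set (Fin q)))
    (r k : ℕ) (hr : r ≤ k + 1) :
    Yvec y Γ r k - Dmat A B C Γ r *ᵥ Uvec u r k = Omat A C Γ r *ᵥ x (k + 1 - r) := by
  obtain ⟨hx, hy⟩ := hT
  set t := k + 1 - r with ht
  funext ij
  obtain ⟨i, j⟩ := ij
  have ha : a (t + (i : ℕ)) j.1 = 0 := by
    by_contra h
    exact j.2 (hsupp _ h)
  have hYentry : Yvec y Γ r k (i, j) = (C *ᵥ x (t + (i : ℕ))) j.1 := by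
    simp only [Yvec, delv, hy, Pi.add_apply, ha, add_zero, ht]
    rw [show a (k + 1 - r + (i : ℕ)) j.1 = 0 from ha, add_zero]
  have hxsol := state_sol A B x u hx t (i : ℕ)
  -- compute D *ᵥ U entry
  have hD : (Dmat A B C Γ r *ᵥ Uvec u r k) (i, j)
      = ∑ j' ∈ Finset.range (i : ℕ),
          ((dele C Γ * A ^ ((i : ℕ) - 1 - j') * B) *ᵥ u (t + j')) j := by
    have hle : (i : ℕ) ≤ r - 1 := by have := i.isLt; omega
    rw [Matrix.mulVec, dotProduct, Fintype.sum_prod_type]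
    have step : ∀ j₁ : Fin (r - 1),
        (∑ l : Fin p, Dmat A B C Γ r (i, j) (j₁, l) * Uvec u r k (j₁, l))
          = if (j₁ : ℕ) < (i : ℕ) then
              ((dele C Γ * A ^ ((i : ℕ) - 1 - (j₁ : ℕ)) * B) *ᵥ u (t + (j₁ : ℕ))) j
            else 0 := by
      intro j₁
      by_cases h : (j₁ : ℕ) < (i : ℕ)
      · simp only [Dmat, h, if_true, if_pos h]
        have hexp : (i : ℕ) - (j₁ : ℕ) - 1 = (i : ℕ) - 1 - (j₁ : ℕ) := by omega
        rw [hexp, Matrix.mulVec, dotProduct]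
        exact Finset.sum_congr rfl fun l _ => rfl
      · simp [Dmat, h]
    rw [Finset.sum_congr rfl fun j₁ _ => step j₁, Fin.sum_univ_eq_sum_range
      (fun j' => if j' < (i : ℕ) then
        ((dele C Γ * A ^ ((i : ℕ) - 1 - j') * B) *ᵥ u (t + j')) j else 0)]
    rw [← Finset.sum_subset (Finset.range_subset_range.mpr hle)
      (fun j' _ hj' => by rw [if_neg (by simp_all [Finset.mem_range])])]
    exact Finset.sum_congr rfl fun j' hj' => if_pos (Finset.mem_range.mp hj')
  have hO : (Omat A C Γ r *ᵥ x t) (i, j) = ((dele C Γ * A ^ (i : ℕ)) *ᵥ x t) j := rfl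
  simp only [Pi.sub_apply, hYentry, hD, hO, hxsol]
  have hC : (C *ᵥ ((A ^ (i : ℕ)) *ᵥ x t + ∑ j' ∈ Finset.range (i : ℕ),
      (A ^ ((i : ℕ) - 1 - j') * B) *ᵥ u (t + j'))) j.1
      = ((dele C Γ * A ^ (i : ℕ)) *ᵥ x t) j
        + ∑ j' ∈ Finset.range (i : ℕ),
            ((dele C Γ * A ^ ((i : ℕ) - 1 - j') * B) *ᵥ u (t + j')) j := by
    rw [Matrix.mulVec_add]
    simp only [Pi.add_apply]
    congr 1
    · rw [← Matrix.mulVec_mulVec]; rfl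
    · rw [← Matrix.mulVecLin_apply, map_sum, Finset.sum_apply]
      refine Finset.sum_congr rfl fun j' _ => ?_
      simp only [Matrix.mulVecLin_apply]
      simp only [Matrix.mulVec_mulVec, ← Matrix.mul_assoc]
      rfl
  rw [hC]
  ring

private lemma Lmat_mul_Omat {n q : ℕ} (A : Matrix (Fin n) (Fin n) ℝ)
    (C : Matrix (Fin q) (Fin n) ℝ) (Γ : Finset (Fin q)) (r : ℕ)
    (hrank : (Omat A C Γ r).rank = n) :
    Lmat A C Γ r * Omat A C Γ r = 1 := by
  set O := Omat A C Γ r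
  have h1 : (Oᵀ * O).rank = n := by rw [Matrix.rank_transpose_mul_self]; exact hrank
  have hsurj : Function.Surjective ((Oᵀ * O).mulVec) := by
    have htop : LinearMap.range (Oᵀ * O).mulVecLin = ⊤ := by
      apply Submodule.eq_top_of_finrank_eq
      rw [Module.finrank_fintype_fun_eq_card, Fintype.card_fin]
      exact h1
    intro v
    obtain ⟨w, hw⟩ := (LinearMap.range_eq_top.mp htop) v
    exact ⟨w, hw⟩
  have hunit : IsUnit (Oᵀ * O) := Matrix.mulVec_surjective_iff_isUnit.mp hsurj
  have hdet : IsUnit (Oᵀ * O).det := (Matrix.isUnit_iff_isUnit_det _).mp hunit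
  show (Oᵀ * O)⁻¹ * Oᵀ * O = 1
  rw [Matrix.mul_assoc]
  exact Matrix.nonsing_inv_mul _ hdet

/-- Lemma LeSPEa: under `s`-sparse observability and attacks supported on `Γ`
with `|Γ| = s`, there exists `r ≤ n` such that for every `k ≥ r - 1` the estimates
`x̂(m) = L_Γ(Y_{k+m-1,Γ} - D_Γ U_{k+m-2})` satisfy `x̂(1) = x_{k-r+1}` and
`x̂(2) - A x̂(1) - B u_{k-r+1} = 0`. -/
theorem true_set_estimate_consistency
    (hn : 0 < n) (hp : 0 < p) (hq : 0 < q) (s : ℕ) (hs : 0 < s)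
    (A : Matrix (Fin n) (Fin n) ℝ) (B : Matrix (Fin n) (Fin p) ℝ)
    (C : Matrix (Fin q) (Fin n) ℝ)
    (hSO : SparseObs A C s)
    (x : ℕ → Fin n → ℝ) (u : ℕ → Fin p → ℝ) (a y : ℕ → Fin q → ℝ)
    (hT : Traj A B C x u a y)
    (Γ : Finset (Fin q)) (hΓ : Γ.card = s)
    (hsupp : ∀ i, Function.support (a i) ⊆ (Γ : Set (Fin q))) :
    ∃ r ≤ n, ∀ k, r ≤ k + 1 →
      xhat A B C u y Γ r k 1 = x (k + 1 - r) ∧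
      xhat A B C u y Γ r k 2 - A *ᵥ xhat A B C u y Γ r k 1 - B *ᵥ u (k + 1 - r) = 0 := by
  refine ⟨n, le_refl n, fun k hk => ?_⟩
  have hobs : (Omat A C Γ n).rank = n := hSO Γ hΓ
  have hLO := Lmat_mul_Omat A C Γ n hobs
  have hx1 : xhat A B C u y Γ n k 1 = x (k + 1 - n) := by
    unfold xhat
    rw [show k + 1 - 1 = k from rfl,
      key_eq A B C x u a y hT Γ hsupp n k hk,
      Matrix.mulVec_mulVec, hLO, Matrix.one_mulVec]
  have hx2 : xhat A B C u y Γ n k 2 = x (k + 2 - n) := by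
    unfold xhat
    rw [show k + 2 - 1 = k + 1 from rfl,
      key_eq A B C x u a y hT Γ hsupp n (k + 1) (by omega),
      Matrix.mulVec_mulVec, hLO, Matrix.one_mulVec,
      show k + 1 + 1 - n = k + 2 - n from rfl]
  refine ⟨hx1, ?_⟩
  rw [hx1, hx2]
  have hstep : x (k + 2 - n) = A *ᵥ x (k + 1 - n) + B *ᵥ u (k + 1 - n) := by
    rw [show k + 2 - n = (k + 1 - n) + 1 by omega]
    exact hT.1 _
  rw [hstep]
  abel


end SS
end

section
/- Suppose the attacks satisfy supp(a_i) ⊆ Γ for all i, and r, k are such that O_Γ(r)ᵀO_Γ(r) is invertible and k ≥ r−1. Then the estimates x̂(m) := L_Γ(Y_{k+m−1,Γ} − D_Γ U_{k+m−2}) satisfy, for every ς ≥ 0: x̂(ς+1) = x_{k−r+ς+1} and x̂(ς+2) − A x̂(ς+1) − B u_{k−r+ς+1} = 0. -/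
open Matrix

namespace SS

variable {n p q : ℕ}

lemma mulVec_sum' {ι α β : Type*} [Fintype β] (s : Finset ι) (A : Matrix α β ℝ)
    (f : ι → β → ℝ) : A *ᵥ (∑ t ∈ s, f t) = ∑ t ∈ s, A *ᵥ f t := by
  funext l
  simp only [Matrix.mulVec, dotProduct, Finset.sum_apply, Finset.mul_sum]
  exact Finset.sum_comm

lemma state_evol (A : Matrix (Fin n) (Fin n) ℝ) (B : Matrix (Fin n) (Fin p) ℝ)
    (x : ℕ → Fin n → ℝ) (u : ℕ → Fin p → ℝ)
    (h : ∀ k, x (k + 1) = A *ᵥ x k + B *ᵥ u k) :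
    ∀ s m, x (m + s) = (A ^ s) *ᵥ x m
      + ∑ t ∈ Finset.range s, ((A ^ (s - 1 - t)) * B) *ᵥ u (m + t) := by
  intro s
  induction s with
  | zero => intro m; simp
  | succ s ih =>
    intro m
    have h1 : m + (s + 1) = (m + s) + 1 := rfl
    rw [h1, h, ih m, Finset.sum_range_succ]
    rw [Matrix.mulVec_add, Matrix.mulVec_mulVec, ← pow_succ']
    have h3 : A *ᵥ (∑ t ∈ Finset.range s, ((A ^ (s - 1 - t)) * B) *ᵥ u (m + t))
        = ∑ t ∈ Finset.range s, ((A ^ (s + 1 - 1 - t)) * B) *ᵥ u (m + t) := by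
      rw [mulVec_sum']
      refine Finset.sum_congr rfl fun t ht => ?_
      rw [Matrix.mulVec_mulVec, ← Matrix.mul_assoc, ← pow_succ']
      have ht' : t < s := Finset.mem_range.mp ht
      have : s - 1 - t + 1 = s + 1 - 1 - t := by omega
      rw [this]
    rw [h3]
    have h4 : ((A ^ (s + 1 - 1 - s)) * B) *ᵥ u (m + s) = B *ᵥ u (m + s) := by
      simp
    rw [h4]
    abel

lemma key_identity (A : Matrix (Fin n) (Fin n) ℝ) (B : Matrix (Fin n) (Fin p) ℝ)
    (C : Matrix (Fin q) (Fin n) ℝ)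
    (x : ℕ → Fin n → ℝ) (u : ℕ → Fin p → ℝ) (a y : ℕ → Fin q → ℝ)
    (hT : Traj A B C x u a y)
    (Γ : Finset (Fin q))
    (hsupp : ∀ i, Function.support (a i) ⊆ (Γ : Set (Fin q)))
    (r k' : ℕ) :
    Yvec y Γ r k' - Dmat A B C Γ r *ᵥ Uvec u r k'
      = Omat A C Γ r *ᵥ x (k' + 1 - r) := by
  obtain ⟨hx, hy⟩ := hT
  funext ij
  obtain ⟨i, j⟩ := ij
  set m := k' + 1 - r with hm
  have ha : a (m + (i : ℕ)) j.1 = 0 := by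
    by_contra hne
    exact j.2 (hsupp (m + (i : ℕ)) hne)
  have hxs := state_evol A B x u hx (i : ℕ) m
  have hYentry : Yvec y Γ r k' (i, j)
      = ((C * A ^ (i : ℕ)) *ᵥ x m) j.1
        + ∑ t ∈ Finset.range (i : ℕ), ((C * A ^ ((i : ℕ) - 1 - t) * B) *ᵥ u (m + t)) j.1 := by
    have : Yvec y Γ r k' (i, j) = (C *ᵥ x (m + (i : ℕ))) j.1 := by
      simp only [Yvec, delv, hy, Pi.add_apply, ha, add_zero, ← hm]
    rw [this, hxs, Matrix.mulVec_add, Matrix.mulVec_mulVec, mulVec_sum']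
    simp only [Pi.add_apply, Matrix.mulVec_mulVec, ← Matrix.mul_assoc]
    rw [Finset.sum_apply]
  have hfilter : Finset.filter (fun t => t < (i : ℕ)) (Finset.range (r - 1))
      = Finset.range (i : ℕ) := by
    ext t
    simp only [Finset.mem_filter, Finset.mem_range]
    have := i.2
    omega
  have hterm : ∀ t : Fin (r - 1),
      (∑ l : Fin p, (if (t : ℕ) < (i : ℕ) then
          (dele C Γ * A ^ ((i : ℕ) - (t : ℕ) - 1) * B) j l else 0) * u (m + (t : ℕ)) l)
      = if (t : ℕ) < (i : ℕ) then
          ((C * A ^ ((i : ℕ) - 1 - (t : ℕ)) * B) *ᵥ u (m + (t : ℕ))) j.1 else 0 := by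
    intro t
    split_ifs with hlt
    · have he : (i : ℕ) - (t : ℕ) - 1 = (i : ℕ) - 1 - (t : ℕ) := by omega
      rw [he]
      simp only [Matrix.mulVec, dotProduct, Matrix.mul_apply, dele]
    · simp
  have hDentry : (Dmat A B C Γ r *ᵥ Uvec u r k') (i, j)
      = ∑ t ∈ Finset.range (i : ℕ), ((C * A ^ ((i : ℕ) - 1 - t) * B) *ᵥ u (m + t)) j.1 := by
    show (∑ tl : Fin (r - 1) × Fin p, Dmat A B C Γ r (i, j) tl * Uvec u r k' tl) = _
    rw [Fintype.sum_prod_type]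
    simp only [Dmat, Uvec, ← hm]
    rw [Fintype.sum_congr _ _ hterm]
    rw [Fin.sum_univ_eq_sum_range
      (fun t => if t < (i : ℕ) then ((C * A ^ ((i : ℕ) - 1 - t) * B) *ᵥ u (m + t)) j.1 else 0)]
    rw [← Finset.sum_filter, hfilter]
  have hOentry : (Omat A C Γ r *ᵥ x m) (i, j) = ((C * A ^ (i : ℕ)) *ᵥ x m) j.1 := by
    simp only [Omat, stack, dele, Matrix.mulVec, dotProduct, Matrix.mul_apply]
  rw [Pi.sub_apply, hYentry, hDentry, hOentry]
  ring

/-- Lemma LeA1b1-type identity: if attacks are supported on `Γ` and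
`O_Γ(r)ᵀ O_Γ(r)` is invertible, then for every `ς ≥ 0`, `x̂(ς+1) = x_{k-r+ς+1}` and
`x̂(ς+2) - A x̂(ς+1) - B u_{k-r+ς+1} = 0`. -/
theorem shifted_estimates_consistency
    (hn : 0 < n) (hp : 0 < p) (hq : 0 < q)
    (A : Matrix (Fin n) (Fin n) ℝ) (B : Matrix (Fin n) (Fin p) ℝ)
    (C : Matrix (Fin q) (Fin n) ℝ)
    (x : ℕ → Fin n → ℝ) (u : ℕ → Fin p → ℝ) (a y : ℕ → Fin q → ℝ)
    (hT : Traj A B C x u a y)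
    (Γ : Finset (Fin q))
    (hsupp : ∀ i, Function.support (a i) ⊆ (Γ : Set (Fin q)))
    (r k : ℕ) (hk : r ≤ k + 1)
    (hinv : IsUnit ((Omat A C Γ r)ᵀ * Omat A C Γ r)) :
    ∀ ς : ℕ,
      xhat A B C u y Γ r k (ς + 1) = x (k + 1 - r + ς) ∧
      xhat A B C u y Γ r k (ς + 2) - A *ᵥ xhat A B C u y Γ r k (ς + 1)
        - B *ᵥ u (k + 1 - r + ς) = 0 := by
  obtain ⟨hx, hy⟩ := hT
  have hkey : ∀ k', Yvec y Γ r k' - Dmat A B C Γ r *ᵥ Uvec u r k'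
      = Omat A C Γ r *ᵥ x (k' + 1 - r) :=
    fun k' => key_identity A B C x u a y ⟨hx, hy⟩ Γ hsupp r k'
  have hLO : Lmat A C Γ r * Omat A C Γ r = 1 := by
    rw [Lmat, Matrix.mul_assoc]
    exact Matrix.nonsing_inv_mul _ ((Matrix.isUnit_iff_isUnit_det _).mp hinv)
  have hxhat : ∀ m, xhat A B C u y Γ r k m = x (k + m - 1 + 1 - r) := by
    intro m
    rw [xhat, hkey, Matrix.mulVec_mulVec, hLO, Matrix.one_mulVec]
  intro ς
  have e1 : k + (ς + 1) - 1 + 1 - r = k + 1 - r + ς := by omega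
  have e2 : k + (ς + 2) - 1 + 1 - r = (k + 1 - r + ς) + 1 := by omega
  have h1 : xhat A B C u y Γ r k (ς + 1) = x (k + 1 - r + ς) := by rw [hxhat, e1]
  refine ⟨h1, ?_⟩
  rw [hxhat, e2, h1, hx]
  abel

end SS
end
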